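/- Let p ≥ 4 be an integer and 1 ≤ a ≤ p−2. For every integer L ≥ 1 and every real q with 0 < q < 1, B^p_{a,1}(L,2) = B^p_{a,1}(L−1,2) + q^{L+1−a} B̃^p_{a,2}(L−1,4). -/
import Mathlib

open Finset

noncomputable section

/-- `(q)_k = ∏_{j=1}^k (1 - q^j)`. -/
def qPoch (q : ℝ) (k : ℕ) : ℝ := ∏ j ∈ Finset.range k, (1 - q ^ (j + 1))

/-- The Andrews–Baxter `q`-trinomial coefficient `T^n(L,A)`. -/
def qTri (q : ℝ) (n : ℤ) (L : ℕ) (A : ℤ) : ℝ :=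
  if |A| ≤ (L : ℤ) then
    ∑ j ∈ Finset.range (L + 1),
      if 0 ≤ (j : ℤ) + A ∧ 0 ≤ (L : ℤ) - 2 * j - A then
        q ^ ((j : ℤ) * ((j : ℤ) + A - n)) * qPoch q L /
          (qPoch q j * qPoch q (((j : ℤ) + A).toNat) * qPoch q (((L : ℤ) - 2 * j - A).toNat))
      else 0
  else 0

/-- Bosonic polynomial `B^p_{a,b}(L,s)`. -/
def Bpoly (q : ℝ) (p a b s : ℤ) (L : ℕ) : ℝ :=
  ∑' j : ℤ,
    (q ^ (p * (p + 1) * j ^ 2 + j * ((p + 1) * a - p * s)) * qTri q 0 L (2 * p * j + a - b)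
      - q ^ ((p * j + a) * ((p + 1) * j + s)) * qTri q 0 L (2 * p * j + a + b))

/-- Bosonic polynomial `B̃^p_{a,b}(L,s)`. -/
def Btpoly (q : ℝ) (p a b s : ℤ) (L : ℕ) : ℝ :=
  ∑' j : ℤ,
    (q ^ (p * (p + 1) * j ^ 2 + j * ((p + 1) * a - p * s)) * qTri q 1 L (2 * p * j + a - b)
      - q ^ (p * (p + 1) * j ^ 2 + j * ((p + 1) * a + p * (s - 2)) + a * (s - 1) - b)
        * qTri q 1 L (2 * p * j + a + b))

section AuxLemmas

variable {q : ℝ}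

lemma qPoch_pos (hq0 : 0 < q) (hq1 : q < 1) (k : ℕ) : 0 < qPoch q k := by
  apply Finset.prod_pos
  intro j _
  have : q ^ (j+1) < 1 := pow_lt_one₀ hq0.le hq1 (Nat.succ_ne_zero j)
  linarith

lemma qPoch_ne (hq0 : 0 < q) (hq1 : q < 1) (k : ℕ) : qPoch q k ≠ 0 :=
  (qPoch_pos hq0 hq1 k).ne'

lemma one_sub_pow_ne (hq0 : 0 < q) (hq1 : q < 1) (k : ℕ) : (1 : ℝ) - q ^ (k+1) ≠ 0 := by
  have : q ^ (k+1) < 1 := pow_lt_one₀ hq0.le hq1 (Nat.succ_ne_zero k)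
  linarith

lemma qPoch_succ (k : ℕ) : qPoch q (k+1) = qPoch q k * (1 - q ^ (k+1)) :=
  Finset.prod_range_succ _ _

def tterm (q : ℝ) (n : ℤ) (L : ℕ) (A : ℤ) (j : ℕ) : ℝ :=
  if 0 ≤ (j : ℤ) + A ∧ 0 ≤ (L : ℤ) - 2 * j - A then
    q ^ ((j : ℤ) * ((j : ℤ) + A - n)) * qPoch q L /
      (qPoch q j * qPoch q (((j : ℤ) + A).toNat) * qPoch q (((L : ℤ) - 2 * j - A).toNat))
  else 0

lemma qTri_eq (n : ℤ) (L : ℕ) (A : ℤ) :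
    qTri q n L A = ∑ j ∈ Finset.range (L + 1), tterm q n L A j := by
  unfold qTri tterm
  split_ifs with h
  · rfl
  · symm
    apply Finset.sum_eq_zero
    intro j hj
    rw [if_neg]
    rintro ⟨h1, h2⟩
    simp only [Finset.mem_range] at hj
    have : (j : ℤ) ≤ L := by exact_mod_cast Nat.lt_succ_iff.mp hj
    rw [abs_le] at h
    push_neg at h
    omega

lemma qTri_zero_of_abs (n : ℤ) (L : ℕ) (A : ℤ) (h : (L:ℤ) < |A|) : qTri q n L A = 0 := by
  unfold qTri; rw [if_neg (by omega)]

/-- L1: `T^1(M+1,D) - q^D T^0(M+1,D) = (1-q^{M+1}) T^0(M,D-1)`. -/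
lemma lemA (hq0 : 0 < q) (hq1 : q < 1) (M : ℕ) (D : ℤ) :
    qTri q 1 (M+1) D - q ^ D * qTri q 0 (M+1) D = (1 - q ^ (M+1)) * qTri q 0 M (D-1) := by
  have hqne : q ≠ 0 := hq0.ne'
  rw [qTri_eq, qTri_eq, qTri_eq, Finset.mul_sum, Finset.mul_sum, ← Finset.sum_sub_distrib]
  rw [Finset.sum_range_succ]
  have htop : tterm q 1 (M+1) D (M+1) - q ^ D * tterm q 0 (M+1) D (M+1) = 0 := by
    unfold tterm
    by_cases hc : 0 ≤ ((M+1 : ℕ) : ℤ) + D ∧ 0 ≤ ((M+1 : ℕ) : ℤ) - 2 * (M+1 : ℕ) - D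
    · have hD : D = -((M:ℤ)+1) := by push_cast at hc ⊢; omega
      rw [if_pos hc, if_pos hc]
      have e1 : ((M+1:ℕ) : ℤ) * (((M+1:ℕ):ℤ) + D - 1) = -((M:ℤ)+1) := by
        push_cast; rw [hD]; ring
      have e0 : ((M+1:ℕ) : ℤ) * (((M+1:ℕ):ℤ) + D - 0) = 0 := by
        push_cast; rw [hD]; ring
      rw [e1, e0, hD]
      rw [zpow_zero]
      ring
    · rw [if_neg hc, if_neg hc]; ring
  rw [htop, add_zero]
  apply Finset.sum_congr rfl
  intro j hj
  simp only [Finset.mem_range] at hj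
  unfold tterm
  by_cases hc : 0 ≤ (j : ℤ) + D ∧ 0 ≤ ((M+1 : ℕ) : ℤ) - 2 * j - D
  · by_cases hb : (j : ℤ) + D = 0
    · -- both sides vanish
      rw [if_pos hc, if_pos hc, if_neg (by push_cast; omega)]
      have e1 : (j : ℤ) * ((j : ℤ) + D - 1) = D := by
        have : D = -(j:ℤ) := by omega
        rw [this]; ring
      have e0 : (j : ℤ) * ((j : ℤ) + D - 0) = 0 := by
        have : D = -(j:ℤ) := by omega
        rw [this]; ring
      rw [e1, e0, zpow_zero]
      ring
    · have hb1 : 1 ≤ (j : ℤ) + D := by omega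
      obtain ⟨b, hbnat⟩ : ∃ b : ℕ, ((j:ℤ) + D).toNat = b + 1 :=
        ⟨((j:ℤ)+D).toNat - 1, by omega⟩
      have hcond2 : 0 ≤ (j : ℤ) + (D - 1) ∧ 0 ≤ ((M : ℕ) : ℤ) - 2 * j - (D - 1) := by
        push_cast at hc ⊢; omega
      rw [if_pos hc, if_pos hc, if_pos hcond2]
      have hb' : ((j:ℤ) + (D-1)).toNat = b := by omega
      have hthird : (((M:ℕ) : ℤ) - 2 * j - (D - 1)).toNat = (((M+1:ℕ) : ℤ) - 2 * j - D).toNat := by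
        push_cast; omega
      rw [hb', hthird, hbnat]
      have hbz : (j : ℤ) + D = (b : ℤ) + 1 := by omega
      have e0 : q ^ ((j:ℤ) * ((j:ℤ) + D - 0)) = q ^ ((j:ℤ) * ((j:ℤ) + D - 1)) * q ^ j := by
        rw [← zpow_natCast q j, ← zpow_add₀ hqne]
        congr 1
        ring
      have eD : q ^ D = q ^ (b+1) / q ^ j := by
        rw [eq_div_iff (pow_ne_zero j hqne), ← zpow_natCast q j, ← zpow_natCast q (b+1),
          ← zpow_add₀ hqne]
        congr 1
        omega
      rw [qPoch_succ b, qPoch_succ M, e0, eD]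
      have h1 := qPoch_ne hq0 hq1 j
      have h2 := qPoch_ne hq0 hq1 b
      have h3 := qPoch_ne hq0 hq1 ((((M:ℕ)+1 : ℤ) - 2 * j - D).toNat)
      have h4 := one_sub_pow_ne hq0 hq1 b
      have h5 := pow_ne_zero j hqne
      have h6 := qPoch_ne hq0 hq1 M
      push_cast at h3 ⊢
      field_simp
      ring
  · have hcond2 : ¬ (0 ≤ (j : ℤ) + (D - 1) ∧ 0 ≤ ((M : ℕ) : ℤ) - 2 * j - (D - 1)) := by
      push_cast at hc ⊢; omega
    rw [if_neg hc, if_neg hc, if_neg hcond2]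
    ring

/-- L2: `T^1(M+1,D) - T^0(M+1,D) = (1-q^{M+1}) q^D T^0(M,D+1)`. -/
lemma lemB (hq0 : 0 < q) (hq1 : q < 1) (M : ℕ) (D : ℤ) :
    qTri q 1 (M+1) D - qTri q 0 (M+1) D = (1 - q ^ (M+1)) * q ^ D * qTri q 0 M (D+1) := by
  have hqne : q ≠ 0 := hq0.ne'
  rw [qTri_eq, qTri_eq, qTri_eq, ← Finset.sum_sub_distrib, Finset.mul_sum]
  rw [Finset.sum_range_succ']
  have h0 : tterm q 1 (M+1) D 0 - tterm q 0 (M+1) D 0 = 0 := by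
    unfold tterm
    split_ifs with hc
    · norm_num
    · ring
  rw [h0, add_zero]
  apply Finset.sum_congr rfl
  intro j hj
  unfold tterm
  by_cases hc : 0 ≤ ((j+1 : ℕ) : ℤ) + D ∧ 0 ≤ ((M+1 : ℕ) : ℤ) - 2 * (j+1 : ℕ) - D
  · have hc' : 0 ≤ (j : ℤ) + (D+1) ∧ 0 ≤ ((M : ℕ) : ℤ) - 2 * j - (D+1) := by
      push_cast at hc ⊢; omega
    rw [if_pos hc, if_pos hc, if_pos hc']
    have harg1 : (((j+1 : ℕ) : ℤ) + D).toNat = ((j : ℤ) + (D+1)).toNat := by push_cast; omega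
    have harg2 : (((M+1 : ℕ) : ℤ) - 2 * (j+1:ℕ) - D).toNat = (((M:ℕ) : ℤ) - 2 * j - (D+1)).toNat := by
      push_cast; omega
    rw [harg1, harg2]
    have e1 : q ^ (((j+1:ℕ):ℤ) * (((j+1:ℕ):ℤ) + D - 0)) =
        q ^ (((j+1:ℕ):ℤ) * (((j+1:ℕ):ℤ) + D - 1)) * q ^ (j+1) := by
      rw [← zpow_natCast q (j+1), ← zpow_add₀ hqne]
      congr 1
      push_cast
      ring
    have e2 : q ^ (((j+1:ℕ):ℤ) * (((j+1:ℕ):ℤ) + D - 1)) =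
        q ^ ((j:ℤ) * ((j:ℤ) + (D+1) - 0)) * q ^ D := by
      rw [← zpow_add₀ hqne]
      congr 1
      push_cast
      ring
    rw [e1, e2, qPoch_succ M, show ((j:ℕ)+1 : ℕ) = j+1 from rfl, qPoch_succ j]
    have h1 := qPoch_ne hq0 hq1 j
    have h2 := qPoch_ne hq0 hq1 (((j : ℤ) + (D+1)).toNat)
    have h3 := qPoch_ne hq0 hq1 ((((M:ℕ) : ℤ) - 2 * j - (D+1)).toNat)
    have h4 := one_sub_pow_ne hq0 hq1 j
    have h6 := qPoch_ne hq0 hq1 M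
    field_simp
  · have hc' : ¬ (0 ≤ (j : ℤ) + (D+1) ∧ 0 ≤ ((M : ℕ) : ℤ) - 2 * j - (D+1)) := by
      push_cast at hc ⊢; omega
    rw [if_neg hc, if_neg hc, if_neg hc']
    ring

/-- per-term Pascal identity -/
lemma lemC_term (hq0 : 0 < q) (hq1 : q < 1) (M j : ℕ) (D : ℤ) :
    tterm q 0 (M+1) D (j+1)
      = tterm q 0 M D (j+1) + q ^ ((M:ℤ)+1-D) * tterm q 1 M (D-1) (j+1)
        + q ^ ((M:ℤ)+1+D) * tterm q 0 M (D+1) j := by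
  have hqne : q ≠ 0 := hq0.ne'
  by_cases hc : 0 ≤ ((j+1 : ℕ) : ℤ) + D ∧ 0 ≤ ((M+1 : ℕ) : ℤ) - 2 * ((j+1:ℕ) : ℤ) - D
  · set b : ℕ := (((j+1 : ℕ) : ℤ) + D).toNat with hbdef
    set c : ℕ := ((((M+1) : ℕ) : ℤ) - 2 * ((j+1:ℕ) : ℤ) - D).toNat with hcdef
    have hbz : (b : ℤ) = (j:ℤ) + 1 + D := by simp [hbdef]; push_cast at hc ⊢; omega
    have hcz : (c : ℤ) = (M:ℤ) - 1 - 2*j - D := by simp [hcdef]; push_cast at hc ⊢; omega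
    have hL_eq : tterm q 0 (M+1) D (j+1)
        = q ^ (((j+1:ℕ):ℤ) * (((j+1:ℕ):ℤ) + D - 0)) * qPoch q (M+1) /
            (qPoch q (j+1) * qPoch q b * qPoch q c) := by
      unfold tterm
      rw [if_pos (by push_cast at hc ⊢; constructor <;> omega)]
    have hu_eq : tterm q 0 M D (j+1)
        = q ^ (((j+1:ℕ):ℤ) * (((j+1:ℕ):ℤ) + D - 0)) * qPoch q M * (1 - q ^ c) /
            (qPoch q (j+1) * qPoch q b * qPoch q c) := by
      unfold tterm
      by_cases h : 0 ≤ ((M:ℕ) : ℤ) - 2 * ((j+1:ℕ):ℤ) - D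
      · rw [if_pos (by push_cast at hc h ⊢; constructor <;> omega)]
        obtain ⟨c0, hc0⟩ : ∃ c0, c = c0 + 1 := ⟨c - 1, by omega⟩
        have h1 : (((M:ℕ):ℤ) - 2 * ((j+1:ℕ):ℤ) - D).toNat = c0 := by push_cast at h ⊢; omega
        have h2 : (((j+1:ℕ):ℤ) + D).toNat = b := rfl
        rw [h1, h2, hc0, qPoch_succ c0]
        have n1 := qPoch_ne hq0 hq1 (j+1)
        have n2 := qPoch_ne hq0 hq1 b
        have n3 := qPoch_ne hq0 hq1 c0
        have n4 := one_sub_pow_ne hq0 hq1 c0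
        field_simp
      · rw [if_neg (by push_cast at h ⊢; omega)]
        have : c = 0 := by push_cast at h ⊢; omega
        rw [this]
        simp
    have hv_eq : tterm q 1 M (D-1) (j+1)
        = q ^ (((j+1:ℕ):ℤ) * (((j+1:ℕ):ℤ) + (D-1) - 1)) * qPoch q M * (1 - q ^ b) /
            (qPoch q (j+1) * qPoch q b * qPoch q c) := by
      unfold tterm
      by_cases h : 0 ≤ ((j+1:ℕ):ℤ) + (D-1)
      · rw [if_pos (by push_cast at hc h ⊢; constructor <;> omega)]
        obtain ⟨b0, hb0⟩ : ∃ b0, b = b0 + 1 := ⟨b - 1, by omega⟩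
        have h1 : (((j+1:ℕ):ℤ) + (D-1)).toNat = b0 := by push_cast at h ⊢; omega
        have h2 : (((M:ℕ):ℤ) - 2 * ((j+1:ℕ):ℤ) - (D-1)).toNat = c := by push_cast at hc ⊢; omega
        rw [h1, h2, hb0, qPoch_succ b0]
        have n1 := qPoch_ne hq0 hq1 (j+1)
        have n2 := qPoch_ne hq0 hq1 b0
        have n3 := qPoch_ne hq0 hq1 c
        have n4 := one_sub_pow_ne hq0 hq1 b0
        field_simp
      · rw [if_neg (by push_cast at h ⊢; omega)]
        have : b = 0 := by push_cast at h ⊢; omega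
        rw [this]
        simp
    have hw_eq : tterm q 0 M (D+1) j
        = q ^ ((j:ℤ) * ((j:ℤ) + (D+1) - 0)) * qPoch q M /
            (qPoch q j * qPoch q b * qPoch q c) := by
      unfold tterm
      rw [if_pos (by push_cast at hc ⊢; constructor <;> omega)]
      have h1 : ((j:ℤ) + (D+1)).toNat = b := by push_cast at hc ⊢; omega
      have h2 : (((M:ℕ):ℤ) - 2 * (j:ℤ) - (D+1)).toNat = c := by push_cast at hc ⊢; omega
      rw [h1, h2]
    -- exponent bridges
    have eV : q ^ ((M:ℤ)+1-D) * q ^ (((j+1:ℕ):ℤ) * (((j+1:ℕ):ℤ) + (D-1) - 1))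
        = q ^ (((j+1:ℕ):ℤ) * (((j+1:ℕ):ℤ) + D - 0)) * q ^ c := by
      rw [← zpow_natCast q c, ← zpow_add₀ hqne, ← zpow_add₀ hqne]
      congr 1
      push_cast
      push_cast at hcz
      linear_combination -hcz
    have eW : q ^ ((M:ℤ)+1+D) * q ^ ((j:ℤ) * ((j:ℤ) + (D+1) - 0))
        = q ^ (((j+1:ℕ):ℤ) * (((j+1:ℕ):ℤ) + D - 0)) * (q ^ b * q ^ c) := by
      rw [← zpow_natCast q b, ← zpow_natCast q c, ← mul_assoc, ← zpow_add₀ hqne,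
        ← zpow_add₀ hqne, ← zpow_add₀ hqne]
      congr 1
      push_cast
      push_cast at hcz hbz
      linear_combination -hcz - hbz
    have eM : q ^ (M+1) = q ^ b * q ^ c * q ^ (j+1) := by
      rw [← pow_add, ← pow_add]
      congr 1
      omega
    have hv_eq' : q ^ ((M:ℤ)+1-D) * tterm q 1 M (D-1) (j+1)
        = q ^ (((j+1:ℕ):ℤ) * (((j+1:ℕ):ℤ) + D - 0)) * q ^ c * qPoch q M * (1 - q ^ b) /
            (qPoch q (j+1) * qPoch q b * qPoch q c) := by
      rw [hv_eq, ← mul_div_assoc,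
        show q ^ ((M:ℤ)+1-D) * (q ^ (((j+1:ℕ):ℤ) * (((j+1:ℕ):ℤ) + (D-1) - 1)) * qPoch q M * (1 - q ^ b))
          = (q ^ ((M:ℤ)+1-D) * q ^ (((j+1:ℕ):ℤ) * (((j+1:ℕ):ℤ) + (D-1) - 1))) * qPoch q M * (1 - q ^ b) from by ring,
        eV]
    have hw_eq' : q ^ ((M:ℤ)+1+D) * tterm q 0 M (D+1) j
        = q ^ (((j+1:ℕ):ℤ) * (((j+1:ℕ):ℤ) + D - 0)) * (q ^ b * q ^ c) * qPoch q M /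
            (qPoch q j * qPoch q b * qPoch q c) := by
      rw [hw_eq, ← mul_div_assoc,
        show q ^ ((M:ℤ)+1+D) * (q ^ ((j:ℤ) * ((j:ℤ) + (D+1) - 0)) * qPoch q M)
          = (q ^ ((M:ℤ)+1+D) * q ^ ((j:ℤ) * ((j:ℤ) + (D+1) - 0))) * qPoch q M from by ring,
        eW]
    rw [hL_eq, hu_eq, hv_eq', hw_eq']
    rw [qPoch_succ M, qPoch_succ j, eM]
    have n1 := qPoch_ne hq0 hq1 j
    have n2 := qPoch_ne hq0 hq1 b
    have n3 := qPoch_ne hq0 hq1 c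
    have n4 := qPoch_ne hq0 hq1 M
    have n5 := one_sub_pow_ne hq0 hq1 j
    field_simp
    ring
  · unfold tterm
    rw [if_neg hc, if_neg (by push_cast at hc ⊢; omega), if_neg (by push_cast at hc ⊢; omega),
      if_neg (by push_cast at hc ⊢; omega)]
    ring

lemma lemC_zero (hq0 : 0 < q) (hq1 : q < 1) (M : ℕ) (D : ℤ) :
    tterm q 0 (M+1) D 0
      = tterm q 0 M D 0 + q ^ ((M:ℤ)+1-D) * tterm q 1 M (D-1) 0 := by
  have hqne : q ≠ 0 := hq0.ne'
  by_cases hc : 0 ≤ ((0:ℕ) : ℤ) + D ∧ 0 ≤ ((M+1 : ℕ) : ℤ) - 2 * ((0:ℕ) : ℤ) - D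
  · set b : ℕ := (((0:ℕ) : ℤ) + D).toNat with hbdef
    set c : ℕ := ((((M+1) : ℕ) : ℤ) - 2 * ((0:ℕ) : ℤ) - D).toNat with hcdef
    have hbz : (b : ℤ) = D := by simp [hbdef]; push_cast at hc ⊢; omega
    have hcz : (c : ℤ) = (M:ℤ) + 1 - D := by simp [hcdef]; push_cast at hc ⊢; omega
    have hL_eq : tterm q 0 (M+1) D 0
        = q ^ (((0:ℕ):ℤ) * (((0:ℕ):ℤ) + D - 0)) * qPoch q (M+1) /
            (qPoch q 0 * qPoch q b * qPoch q c) := by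
      unfold tterm
      rw [if_pos (by push_cast at hc ⊢; constructor <;> omega)]
    have hu_eq : tterm q 0 M D 0
        = q ^ (((0:ℕ):ℤ) * (((0:ℕ):ℤ) + D - 0)) * qPoch q M * (1 - q ^ c) /
            (qPoch q 0 * qPoch q b * qPoch q c) := by
      unfold tterm
      by_cases h : 0 ≤ ((M:ℕ) : ℤ) - 2 * ((0:ℕ):ℤ) - D
      · rw [if_pos (by push_cast at hc h ⊢; constructor <;> omega)]
        obtain ⟨c0, hc0⟩ : ∃ c0, c = c0 + 1 := ⟨c - 1, by omega⟩
        have h1 : (((M:ℕ):ℤ) - 2 * ((0:ℕ):ℤ) - D).toNat = c0 := by push_cast at h ⊢; omega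
        have h2 : (((0:ℕ):ℤ) + D).toNat = b := rfl
        rw [h1, h2, hc0, qPoch_succ c0]
        have n1 := qPoch_ne hq0 hq1 0
        have n2 := qPoch_ne hq0 hq1 b
        have n3 := qPoch_ne hq0 hq1 c0
        have n4 := one_sub_pow_ne hq0 hq1 c0
        field_simp
      · rw [if_neg (by push_cast at h ⊢; omega)]
        have : c = 0 := by push_cast at h ⊢; omega
        rw [this]
        simp
    have hv_eq : tterm q 1 M (D-1) 0
        = q ^ (((0:ℕ):ℤ) * (((0:ℕ):ℤ) + (D-1) - 1)) * qPoch q M * (1 - q ^ b) /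
            (qPoch q 0 * qPoch q b * qPoch q c) := by
      unfold tterm
      by_cases h : 0 ≤ ((0:ℕ):ℤ) + (D-1)
      · rw [if_pos (by push_cast at hc h ⊢; constructor <;> omega)]
        obtain ⟨b0, hb0⟩ : ∃ b0, b = b0 + 1 := ⟨b - 1, by omega⟩
        have h1 : (((0:ℕ):ℤ) + (D-1)).toNat = b0 := by push_cast at h ⊢; omega
        have h2 : (((M:ℕ):ℤ) - 2 * ((0:ℕ):ℤ) - (D-1)).toNat = c := by push_cast at hc ⊢; omega
        rw [h1, h2, hb0, qPoch_succ b0]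
        have n1 := qPoch_ne hq0 hq1 0
        have n2 := qPoch_ne hq0 hq1 b0
        have n3 := qPoch_ne hq0 hq1 c
        have n4 := one_sub_pow_ne hq0 hq1 b0
        field_simp
      · rw [if_neg (by push_cast at h ⊢; omega)]
        have : b = 0 := by push_cast at h ⊢; omega
        rw [this]
        simp
    have eV : q ^ ((M:ℤ)+1-D) * q ^ (((0:ℕ):ℤ) * (((0:ℕ):ℤ) + (D-1) - 1))
        = q ^ (((0:ℕ):ℤ) * (((0:ℕ):ℤ) + D - 0)) * q ^ c := by
      rw [← zpow_natCast q c, ← zpow_add₀ hqne, ← zpow_add₀ hqne]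
      congr 1
      push_cast
      push_cast at hcz
      linear_combination -hcz
    have hv_eq' : q ^ ((M:ℤ)+1-D) * tterm q 1 M (D-1) 0
        = q ^ (((0:ℕ):ℤ) * (((0:ℕ):ℤ) + D - 0)) * q ^ c * qPoch q M * (1 - q ^ b) /
            (qPoch q 0 * qPoch q b * qPoch q c) := by
      rw [hv_eq, ← mul_div_assoc,
        show q ^ ((M:ℤ)+1-D) * (q ^ (((0:ℕ):ℤ) * (((0:ℕ):ℤ) + (D-1) - 1)) * qPoch q M * (1 - q ^ b))
          = (q ^ ((M:ℤ)+1-D) * q ^ (((0:ℕ):ℤ) * (((0:ℕ):ℤ) + (D-1) - 1))) * qPoch q M * (1 - q ^ b) from by ring,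
        eV]
    have eM : q ^ (M+1) = q ^ b * q ^ c := by
      rw [← pow_add]
      congr 1
      omega
    rw [hL_eq, hu_eq, hv_eq']
    rw [qPoch_succ M, eM]
    have n1 := qPoch_ne hq0 hq1 0
    have n2 := qPoch_ne hq0 hq1 b
    have n3 := qPoch_ne hq0 hq1 c
    have n4 := qPoch_ne hq0 hq1 M
    field_simp
    ring
  · unfold tterm
    rw [if_neg hc, if_neg (by push_cast at hc ⊢; omega), if_neg (by push_cast at hc ⊢; omega)]
    ring

/-- Pascal-type recurrence for q-trinomials. -/
lemma lemC (hq0 : 0 < q) (hq1 : q < 1) (M : ℕ) (D : ℤ) :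
    qTri q 0 (M+1) D = qTri q 0 M D + q ^ ((M:ℤ)+1-D) * qTri q 1 M (D-1)
      + q ^ ((M:ℤ)+1+D) * qTri q 0 M (D+1) := by
  rw [qTri_eq, qTri_eq, qTri_eq, qTri_eq, Finset.mul_sum, Finset.mul_sum]
  rw [Finset.sum_range_succ' (fun j => tterm q 0 (M+1) D j) (M+1)]
  have hmain : ∑ j ∈ Finset.range (M+1), tterm q 0 (M+1) D (j+1)
      = ∑ j ∈ Finset.range (M+1),
          (tterm q 0 M D (j+1) + q ^ ((M:ℤ)+1-D) * tterm q 1 M (D-1) (j+1)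
            + q ^ ((M:ℤ)+1+D) * tterm q 0 M (D+1) j) :=
    Finset.sum_congr rfl (fun j _ => lemC_term hq0 hq1 M j D)
  rw [hmain, Finset.sum_add_distrib, Finset.sum_add_distrib, lemC_zero hq0 hq1 M D]
  have htopu : tterm q 0 M D (M+1) = 0 := by
    unfold tterm
    rw [if_neg]
    push_cast
    omega
  have htopv : tterm q 1 M (D-1) (M+1) = 0 := by
    unfold tterm
    rw [if_neg]
    push_cast
    omega
  have e1 : (∑ j ∈ Finset.range (M+1), tterm q 0 M D (j+1)) + tterm q 0 M D 0
      = ∑ j ∈ Finset.range (M+1), tterm q 0 M D j := by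
    rw [← Finset.sum_range_succ' (tterm q 0 M D) (M+1), Finset.sum_range_succ, htopu, add_zero]
  have e2 : (∑ j ∈ Finset.range (M+1), q ^ ((M:ℤ)+1-D) * tterm q 1 M (D-1) (j+1))
        + q ^ ((M:ℤ)+1-D) * tterm q 1 M (D-1) 0
      = ∑ j ∈ Finset.range (M+1), q ^ ((M:ℤ)+1-D) * tterm q 1 M (D-1) j := by
    rw [← Finset.sum_range_succ' (fun j => q ^ ((M:ℤ)+1-D) * tterm q 1 M (D-1) j) (M+1),
      Finset.sum_range_succ, htopv, mul_zero, add_zero]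
  linarith [e1, e2]

lemma qTri_L0 (n A : ℤ) : qTri q n 0 A = if A = 0 then 1 else 0 := by
  unfold qTri
  by_cases h : A = 0
  · subst h
    rw [if_pos (by simp)]
    simp [qPoch]
  · rw [if_neg (by simpa [abs_le] using fun h1 h2 => h (le_antisymm h2 h1)), if_neg h]

lemma lemA' (hq0 : 0 < q) (hq1 : q < 1) (M : ℕ) (D : ℤ) :
    qTri q 1 M D - q ^ D * qTri q 0 M D = (1 - q ^ M) * qTri q 0 (M-1) (D-1) := by
  cases M with
  | zero =>
    by_cases hD : D = 0 <;> simp [qTri_L0, hD]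
  | succ M' =>
    simpa using lemA hq0 hq1 M' D

lemma lemB' (hq0 : 0 < q) (hq1 : q < 1) (M : ℕ) (D : ℤ) :
    qTri q 1 M D - qTri q 0 M D = (1 - q ^ M) * q ^ D * qTri q 0 (M-1) (D+1) := by
  cases M with
  | zero =>
    by_cases hD : D = 0 <;> simp [qTri_L0, hD]
  | succ M' =>
    simpa using lemB hq0 hq1 M' D

lemma arg_large (p a : ℤ) (hp : 4 ≤ p) (M : ℕ) (t : ℤ) (ht : |t| ≤ |a| + 2) (j : ℤ)
    (hj : (M : ℤ) + |a| + 3 < |j|) : (M : ℤ) < |2 * p * j + t| := by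
  have h1 : |2 * p * j| ≤ |2 * p * j + t| + |t| := by
    simpa [abs_neg] using abs_add_le (2 * p * j + t) (-t)
  have h2 : |2 * p * j| = 2 * p * |j| := by
    rw [abs_mul, abs_of_nonneg (by linarith : (0:ℤ) ≤ 2 * p)]
  have h3 : 8 * |j| ≤ 2 * p * |j| := by nlinarith [abs_nonneg j]
  have h4 : (0:ℤ) ≤ |a| := abs_nonneg a
  have h5 : (0:ℤ) ≤ (M:ℤ) := Int.ofNat_nonneg M
  linarith

/-- per-j identity -/
lemma perj (hq0 : 0 < q) (hq1 : q < 1) (p a : ℤ) (M : ℕ) (j : ℤ) :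
    (q ^ (p * (p + 1) * j ^ 2 + j * ((p + 1) * a - p * 2)) * qTri q 0 (M+1) (2 * p * j + a - 1)
      - q ^ ((p * j + a) * ((p + 1) * j + 2)) * qTri q 0 (M+1) (2 * p * j + a + 1))
    = (q ^ (p * (p + 1) * j ^ 2 + j * ((p + 1) * a - p * 2)) * qTri q 0 M (2 * p * j + a - 1)
      - q ^ ((p * j + a) * ((p + 1) * j + 2)) * qTri q 0 M (2 * p * j + a + 1))
      + q ^ (((M+1 : ℕ) : ℤ) + 1 - a) *
        (q ^ (p * (p + 1) * j ^ 2 + j * ((p + 1) * a - p * 4)) * qTri q 1 M (2 * p * j + a - 2)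
          - q ^ (p * (p + 1) * j ^ 2 + j * ((p + 1) * a + p * (4 - 2)) + a * (4 - 1) - 2)
            * qTri q 1 M (2 * p * j + a + 2)) := by
  have hqne : q ≠ 0 := hq0.ne'
  rw [lemC hq0 hq1 M (2 * p * j + a - 1), lemC hq0 hq1 M (2 * p * j + a + 1)]
  rw [show 2 * p * j + a - 1 - 1 = 2 * p * j + a - 2 from by ring,
    show 2 * p * j + a - 1 + 1 = 2 * p * j + a from by ring,
    show 2 * p * j + a + 1 - 1 = 2 * p * j + a from by ring,
    show 2 * p * j + a + 1 + 1 = 2 * p * j + a + 2 from by ring]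
  have hA := lemB' hq0 hq1 M (2 * p * j + a)
  rw [show 2 * p * j + a + 1 = 2 * p * j + a + 1 from rfl] at hA
  have hB := lemA' hq0 hq1 M (2 * p * j + a + 2)
  rw [show 2 * p * j + a + 2 - 1 = 2 * p * j + a + 1 from by ring] at hB
  have g1 : q ^ (p * (p + 1) * j ^ 2 + j * ((p + 1) * a - p * 2)) * q ^ ((M:ℤ) + 1 - (2 * p * j + a - 1))
      = q ^ (((M+1 : ℕ) : ℤ) + 1 - a) * q ^ (p * (p + 1) * j ^ 2 + j * ((p + 1) * a - p * 4)) := by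
    rw [← zpow_add₀ hqne, ← zpow_add₀ hqne]
    congr 1
    push_cast
    ring
  have g2 : q ^ (p * (p + 1) * j ^ 2 + j * ((p + 1) * a - p * 2)) * q ^ ((M:ℤ) + 1 + (2 * p * j + a - 1))
      = q ^ ((p * j + a) * ((p + 1) * j + 2)) * q ^ ((M:ℤ) + 1 - (2 * p * j + a + 1)) := by
    rw [← zpow_add₀ hqne, ← zpow_add₀ hqne]
    congr 1
    ring
  have g3 : q ^ ((p * j + a) * ((p + 1) * j + 2)) * q ^ ((M:ℤ) + 1 + (2 * p * j + a + 1))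
      = q ^ (((M+1 : ℕ) : ℤ) + 1 - a) * q ^ (p * (p + 1) * j ^ 2 + j * ((p + 1) * a + p * (4 - 2)) + a * (4 - 1) - 2)
        * q ^ (2 * p * j + a + 2) := by
    rw [← zpow_add₀ hqne, ← zpow_add₀ hqne, ← zpow_add₀ hqne]
    congr 1
    push_cast
    ring
  have g4 : q ^ ((p * j + a) * ((p + 1) * j + 2)) * q ^ ((M:ℤ) + 1 - (2 * p * j + a + 1)) * q ^ (2 * p * j + a)
      = q ^ (((M+1 : ℕ) : ℤ) + 1 - a)
        * q ^ (p * (p + 1) * j ^ 2 + j * ((p + 1) * a + p * (4 - 2)) + a * (4 - 1) - 2) := by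
    rw [← zpow_add₀ hqne, ← zpow_add₀ hqne, ← zpow_add₀ hqne]
    congr 1
    push_cast
    ring
  linear_combination
    qTri q 1 M (2 * p * j + a - 2) * g1
    + qTri q 0 M (2 * p * j + a) * g2
    - qTri q 0 M (2 * p * j + a + 2) * g3
    - (q ^ ((p * j + a) * ((p + 1) * j + 2)) * q ^ ((M:ℤ) + 1 - (2 * p * j + a + 1))) * hA
    + (q ^ (((M+1 : ℕ) : ℤ) + 1 - a)
        * q ^ (p * (p + 1) * j ^ 2 + j * ((p + 1) * a + p * (4 - 2)) + a * (4 - 1) - 2)) * hB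
    - ((1 - q ^ M) * qTri q 0 (M-1) (2 * p * j + a + 1)) * g4

end AuxLemmas

/-- For integers `p ≥ 4`, `1 ≤ a ≤ p-2`, every `L ≥ 1` and `0 < q < 1`:
`B^p_{a,1}(L,2) = B^p_{a,1}(L-1,2) + q^{L+1-a} B̃^p_{a,2}(L-1,4)`. -/
theorem Bpoly_recurrence_a1_s2 (p a : ℤ) (hp : 4 ≤ p) (ha1 : 1 ≤ a) (ha2 : a ≤ p - 2)
    (L : ℕ) (hL : 1 ≤ L) (q : ℝ) (hq0 : 0 < q) (hq1 : q < 1) :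
    Bpoly q p a 1 2 L
      = Bpoly q p a 1 2 (L - 1) + q ^ ((L : ℤ) + 1 - a) * Btpoly q p a 2 4 (L - 1) := by
  obtain ⟨M, rfl⟩ : ∃ M, L = M + 1 := ⟨L - 1, by omega⟩
  rw [show M + 1 - 1 = M from rfl]
  unfold Bpoly Btpoly
  set s : Finset ℤ := Finset.Icc (-((M : ℤ) + |a| + 4)) ((M : ℤ) + |a| + 4) with hs
  have habs : ∀ j : ℤ, j ∉ s → (M : ℤ) + |a| + 3 < |j| := by
    intro j hj
    simp only [hs, Finset.mem_Icc, not_and_or, not_le] at hj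
    rcases hj with h | h
    · have hjj : |j| = -j := abs_of_nonpos (by linarith [abs_nonneg a, Int.ofNat_nonneg M])
      rw [hjj]
      linarith
    · have hjj : |j| = j := abs_of_nonneg (by linarith [abs_nonneg a, Int.ofNat_nonneg M])
      rw [hjj]
      linarith
  have hg : Summable (fun j : ℤ =>
      q ^ (p * (p + 1) * j ^ 2 + j * ((p + 1) * a - p * 2)) * qTri q 0 M (2 * p * j + a - 1)
        - q ^ ((p * j + a) * ((p + 1) * j + 2)) * qTri q 0 M (2 * p * j + a + 1)) := by
    apply summable_of_ne_finset_zero (s := s)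
    intro j hj
    have h1 : (M : ℤ) < |2 * p * j + a - 1| := by
      rw [show (2 * p * j + a - 1 : ℤ) = 2 * p * j + (a - 1) from by ring]
      exact arg_large p a hp M (a - 1) (by
        calc |a - 1| = |a + (-1)| := by ring_nf
        _ ≤ |a| + |(-1 : ℤ)| := abs_add_le _ _
        _ ≤ |a| + 2 := by norm_num) j (habs j hj)
    have h2 : (M : ℤ) < |2 * p * j + a + 1| := by
      rw [show (2 * p * j + a + 1 : ℤ) = 2 * p * j + (a + 1) from by ring]
      exact arg_large p a hp M (a + 1) (by
        calc |a + 1| ≤ |a| + |(1 : ℤ)| := abs_add_le _ _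
        _ ≤ |a| + 2 := by norm_num) j (habs j hj)
    rw [qTri_zero_of_abs 0 M _ h1, qTri_zero_of_abs 0 M _ h2, mul_zero, mul_zero, sub_zero]
  have hh : Summable (fun j : ℤ =>
      q ^ (p * (p + 1) * j ^ 2 + j * ((p + 1) * a - p * 4)) * qTri q 1 M (2 * p * j + a - 2)
        - q ^ (p * (p + 1) * j ^ 2 + j * ((p + 1) * a + p * (4 - 2)) + a * (4 - 1) - 2)
          * qTri q 1 M (2 * p * j + a + 2)) := by
    apply summable_of_ne_finset_zero (s := s)
    intro j hj
    have h1 : (M : ℤ) < |2 * p * j + a - 2| := by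
      rw [show (2 * p * j + a - 2 : ℤ) = 2 * p * j + (a - 2) from by ring]
      exact arg_large p a hp M (a - 2) (by
        calc |a - 2| = |a + (-2)| := by ring_nf
        _ ≤ |a| + |(-2 : ℤ)| := abs_add_le _ _
        _ ≤ |a| + 2 := by norm_num) j (habs j hj)
    have h2 : (M : ℤ) < |2 * p * j + a + 2| := by
      rw [show (2 * p * j + a + 2 : ℤ) = 2 * p * j + (a + 2) from by ring]
      exact arg_large p a hp M (a + 2) (by
        calc |a + 2| ≤ |a| + |(2 : ℤ)| := abs_add_le _ _
        _ ≤ |a| + 2 := by norm_num) j (habs j hj)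
    rw [qTri_zero_of_abs 1 M _ h1, qTri_zero_of_abs 1 M _ h2, mul_zero, mul_zero, sub_zero]
  calc
    (∑' j : ℤ,
        (q ^ (p * (p + 1) * j ^ 2 + j * ((p + 1) * a - p * 2)) * qTri q 0 (M+1) (2 * p * j + a - 1)
          - q ^ ((p * j + a) * ((p + 1) * j + 2)) * qTri q 0 (M+1) (2 * p * j + a + 1)))
      = ∑' j : ℤ,
          ((q ^ (p * (p + 1) * j ^ 2 + j * ((p + 1) * a - p * 2)) * qTri q 0 M (2 * p * j + a - 1)
            - q ^ ((p * j + a) * ((p + 1) * j + 2)) * qTri q 0 M (2 * p * j + a + 1))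
          + q ^ (((M+1 : ℕ) : ℤ) + 1 - a) *
            (q ^ (p * (p + 1) * j ^ 2 + j * ((p + 1) * a - p * 4)) * qTri q 1 M (2 * p * j + a - 2)
              - q ^ (p * (p + 1) * j ^ 2 + j * ((p + 1) * a + p * (4 - 2)) + a * (4 - 1) - 2)
                * qTri q 1 M (2 * p * j + a + 2))) :=
      tsum_congr (fun j => perj hq0 hq1 p a M j)
    _ = _ := by
      rw [Summable.tsum_add hg (hh.mul_left _), tsum_mul_left]
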